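/- Let φ be an orientation-reversing automorphism of the barycentric subdivision B of a 2-connected loopless plane map, and suppose φ fixes some vertex. Then the submap of B consisting of all vertices and edges fixed by φ is a disjoint union of cycles, in which every vertex has degree exactly 2, and the two fixed edges at each fixed vertex are diametrically opposite in the rotation around that vertex. -/
import Mathlib


/-- The orbit equivalence relation of a permutation: `x ~ y` iff some power of `f` maps `x` to `y`. -/
def permOrbit {D : Type} (f : Equiv.Perm D) : Setoid D where
  r x y := ∃ n : ℤ, (f ^ n) x = y
  iseqv := by
    refine ⟨fun x => ⟨0, by simp⟩, ?_, ?_⟩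
    · rintro x y ⟨n, rfl⟩
      exact ⟨-n, by simp [← Equiv.Perm.mul_apply, ← zpow_add]⟩
    · rintro x y z ⟨m, rfl⟩ ⟨n, rfl⟩
      exact ⟨n + m, by simp [← Equiv.Perm.mul_apply, ← zpow_add]⟩

/-- A combinatorial map: a set `D` of darts (directed edges), a rotation `σ` giving the
cyclic order of darts around each vertex, and a fixed-point-free involution `θ`
matching each dart with its reverse. -/
structure CombMap (D : Type) where
  σ : Equiv.Perm D
  θ : Equiv.Perm D
  θ_invol : ∀ d, θ (θ d) = d
  θ_fixfree : ∀ d, θ d ≠ d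

namespace CombMap

variable {D D' : Type} (M : CombMap D)

/-- Vertices are the orbits of `σ`. -/
def Vertices : Type := Quotient (permOrbit M.σ)
/-- Edges are the orbits of `θ`. -/
def Edges : Type := Quotient (permOrbit M.θ)
/-- The face permutation `d ↦ θ (σ d)`. -/
def facePerm : Equiv.Perm D := M.σ.trans M.θ
/-- Faces are the orbits of the face permutation. -/
def Faces : Type := Quotient (permOrbit M.facePerm)

def vertexOf (d : D) : M.Vertices := Quotient.mk _ d
def edgeOf (d : D) : M.Edges := Quotient.mk _ d
def faceOf (d : D) : M.Faces := Quotient.mk _ d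

noncomputable def nV : ℕ := Nat.card M.Vertices
noncomputable def nE : ℕ := Nat.card M.Edges
noncomputable def nF : ℕ := Nat.card M.Faces

/-- The degree of a vertex: the number of darts emanating from it. -/
noncomputable def degree (v : M.Vertices) : ℕ := Nat.card {d : D // M.vertexOf d = v}
/-- The size of a face: the number of darts in its facial walk. -/
noncomputable def faceSize (f : M.Faces) : ℕ := Nat.card {d : D // M.faceOf d = f}

/-- A map is connected if any dart can be reached from any other by `σ`- and `θ`-steps. -/
def IsConnected : Prop :=
  ∀ d d' : D, Relation.ReflTransGen (fun a b => M.σ a = b ∨ M.θ a = b) d d'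

/-- Euler's formula for genus 0: `|V| + |F| = |E| + 2`. -/
def EulerPlane : Prop := M.nV + M.nF = M.nE + 2

/-- A plane map: a connected map of genus 0. -/
def IsPlaneMap : Prop := M.IsConnected ∧ M.EulerPlane

def IsQuadrangulation : Prop := ∀ f : M.Faces, M.faceSize f = 4
def IsTriangulation : Prop := ∀ f : M.Faces, M.faceSize f = 3

/-- A dart is a loop if both of its ends are at the same vertex. -/
def IsLoop (d : D) : Prop := M.vertexOf d = M.vertexOf (M.θ d)

/-- Two darts are parallel if they belong to distinct edges with the same pair of endpoints. -/
def Parallel (d d' : D) : Prop :=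
  M.edgeOf d ≠ M.edgeOf d' ∧ M.vertexOf d = M.vertexOf d' ∧
    M.vertexOf (M.θ d) = M.vertexOf (M.θ d')

/-- A map is simple if it has no loops and no parallel edges. -/
def IsSimple : Prop := (∀ d, ¬ M.IsLoop d) ∧ ∀ d d', ¬ M.Parallel d d'

/-- A map is bipartite if its vertices can be 2-coloured with no monochromatic edge. -/
def IsBipartite : Prop :=
  ∃ c : M.Vertices → Bool, ∀ d : D, c (M.vertexOf d) ≠ c (M.vertexOf (M.θ d))

/-- Isomorphism of maps: a bijection of darts commuting with the rotation and the reversal. -/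
def Iso (M' : CombMap D') : Prop :=
  ∃ e : D ≃ D', (∀ d, e (M.σ d) = M'.σ (e d)) ∧ (∀ d, e (M.θ d) = M'.θ (e d))

end CombMap

namespace CombMap

/-- Darts of the barycentric subdivision of a map with dart set `D`. Each dart `d` of the
original map gives six darts: `(d,0)/(d,2)`: the two halves of the vertex–edge arc of `d`;
`(d,1)/(d,4)`: the vertex–face arc; `(d,3)/(d,5)`: the edge–face arc. Darts `(d,0),(d,1)`
sit at the original vertex of `d`, darts `(d,2),(d,3)` at the edge-vertex of `d`, and
darts `(d,4),(d,5)` at the face-vertex of `d`. -/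
abbrev BaryDart (D : Type) : Type := D × Fin 6

/-- Rotation of the barycentric subdivision. -/
def barySigmaFun {D : Type} (M : CombMap D) : BaryDart D → BaryDart D := fun x =>
  match x with
  | (d, ⟨0, _⟩) => (d, 1)
  | (d, ⟨1, _⟩) => (M.σ d, 0)
  | (d, ⟨2, _⟩) => (M.θ d, 3)
  | (d, ⟨3, _⟩) => (d, 2)
  | (d, ⟨4, _⟩) => (d, 5)
  | (d, ⟨5, _⟩) => (M.facePerm.symm d, 4)
  | (_, ⟨n + 6, h⟩) => absurd h (by omega)

/-- Inverse of the rotation of the barycentric subdivision. -/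
def barySigmaInv {D : Type} (M : CombMap D) : BaryDart D → BaryDart D := fun x =>
  match x with
  | (d, ⟨0, _⟩) => (M.σ.symm d, 1)
  | (d, ⟨1, _⟩) => (d, 0)
  | (d, ⟨2, _⟩) => (d, 3)
  | (d, ⟨3, _⟩) => (M.θ d, 2)
  | (d, ⟨4, _⟩) => (M.facePerm d, 5)
  | (d, ⟨5, _⟩) => (d, 4)
  | (_, ⟨n + 6, h⟩) => absurd h (by omega)

/-- Reversal of the barycentric subdivision: `(d,0)↔(d,2)`, `(d,1)↔(d,4)`, `(d,3)↔(d,5)`. -/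
def baryThetaFun {D : Type} : BaryDart D → BaryDart D := fun x =>
  match x with
  | (d, ⟨0, _⟩) => (d, 2)
  | (d, ⟨1, _⟩) => (d, 4)
  | (d, ⟨2, _⟩) => (d, 0)
  | (d, ⟨3, _⟩) => (d, 5)
  | (d, ⟨4, _⟩) => (d, 1)
  | (d, ⟨5, _⟩) => (d, 3)
  | (_, ⟨n + 6, h⟩) => absurd h (by omega)

/-- The barycentric subdivision of a map `M`: the properly 3-coloured triangulation whose
vertices are the vertices, edges and faces of `M` (colours 0, 1, 2 respectively), with a
triangle for every flag of `M`. -/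
def bary {D : Type} (M : CombMap D) : CombMap (BaryDart D) where
  σ := { toFun := barySigmaFun M
         invFun := barySigmaInv M
         left_inv := by
           rintro ⟨d, i⟩
           fin_cases i <;>
             simp [barySigmaFun, barySigmaInv, M.θ_invol]
         right_inv := by
           rintro ⟨d, i⟩
           fin_cases i <;>
             simp [barySigmaFun, barySigmaInv, M.θ_invol] }
  θ := { toFun := (baryThetaFun (D := D))
         invFun := (baryThetaFun (D := D))
         left_inv := by rintro ⟨d, i⟩; fin_cases i <;> simp [baryThetaFun]
         right_inv := by rintro ⟨d, i⟩; fin_cases i <;> simp [baryThetaFun] }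
  θ_invol := by rintro ⟨d, i⟩; fin_cases i <;> simp [baryThetaFun]
  θ_fixfree := by
    rintro ⟨d, i⟩ h
    fin_cases i <;> simp [baryThetaFun] at h

/-- The 3-colouring of the vertices of the barycentric subdivision, at dart level:
colour 0 for original vertices, colour 1 for edge-vertices, colour 2 for face-vertices. -/
def baryCol {D : Type} : BaryDart D → Fin 3 := fun x =>
  match x with
  | (_, ⟨0, _⟩) => 0
  | (_, ⟨1, _⟩) => 0
  | (_, ⟨2, _⟩) => 1
  | (_, ⟨3, _⟩) => 1
  | (_, ⟨4, _⟩) => 2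
  | (_, ⟨5, _⟩) => 2
  | (_, ⟨n + 6, h⟩) => absurd h (by omega)

end CombMap

namespace CombMap

/-- The map stays connected after removing a vertex `v`. -/
def ConnectedAvoiding {D : Type} (M : CombMap D) (v : M.Vertices) : Prop :=
  ∀ d d' : D, M.vertexOf d ≠ v → M.vertexOf d' ≠ v →
    Relation.ReflTransGen
      (fun a b => M.vertexOf a ≠ v ∧ M.vertexOf b ≠ v ∧ (M.σ a = b ∨ M.θ a = b)) d d'

/-- A map is 2-connected if it has no loops and no cut vertex. -/
def TwoConnected {D : Type} (M : CombMap D) : Prop :=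
  (∀ d, ¬ M.IsLoop d) ∧ ∀ v : M.Vertices, M.ConnectedAvoiding v

/-- An orientation-reversing automorphism of a map: a dart bijection commuting with the
reversal and conjugating the rotation to its inverse. -/
def IsORAutoMap {D : Type} (M : CombMap D) (φ : Equiv.Perm D) : Prop :=
  (∀ d, φ (M.θ d) = M.θ (φ d)) ∧ (∀ d, φ (M.σ d) = M.σ.symm (φ d))

/-- `φ` fixes the vertex `v` (it permutes the darts at `v`). -/
def FixesVertex {D : Type} (M : CombMap D) (φ : Equiv.Perm D) (v : M.Vertices) : Prop :=
  ∀ d, M.vertexOf d = v → M.vertexOf (φ d) = v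

/-- The dart `d` belongs to an edge fixed by `φ`. -/
def FixedEdgeDart {D : Type} (M : CombMap D) (φ : Equiv.Perm D) (d : D) : Prop :=
  φ d = d ∨ φ d = M.θ d

end CombMap

namespace CombMap
variable {D : Type}

lemma baryCol_theta (M : CombMap D) (x : BaryDart D) : baryCol (M.bary.θ x) ≠ baryCol x := by
  obtain ⟨d, i⟩ := x
  fin_cases i <;> simp [bary, baryThetaFun, baryCol]

lemma snd_sigma (M : CombMap D) (x : BaryDart D) :
    ((M.bary.σ x).2 : ℕ) % 2 = 1 - ((x.2 : ℕ) % 2) := by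
  obtain ⟨d, i⟩ := x
  fin_cases i <;> simp [bary, barySigmaFun] <;> rfl

lemma snd_phi (M : CombMap D) (φ : Equiv.Perm (BaryDart D))
    (hθ : ∀ d, φ (M.bary.θ d) = M.bary.θ (φ d))
    (hcol : ∀ x, baryCol (φ x) = baryCol x) (x : BaryDart D) : (φ x).2 = x.2 := by
  have h1 := hcol x
  have h2 : baryCol (M.bary.θ (φ x)) = baryCol (M.bary.θ x) := by
    rw [← hθ, hcol]
  rcases hx : φ x with ⟨d', i'⟩
  rw [hx] at h1 h2
  obtain ⟨d, i⟩ := x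
  fin_cases i <;> fin_cases i' <;> simp_all [bary, baryThetaFun, baryCol]

end CombMap

namespace CombMap
variable {D : Type}

lemma snd_sigma_iterate (M : CombMap D) (x : BaryDart D) (i : ℕ) :
    (((⇑M.bary.σ)^[i] x).2 : ℕ) % 2 = (i + (x.2 : ℕ)) % 2 := by
  induction i with
  | zero => simp
  | succ i ih =>
    rw [Function.iterate_succ_apply', snd_sigma]
    omega

end CombMap

section orbit
variable {D : Type} [Finite D] (σ : Equiv.Perm D) (x₀ : D)

lemma perm_period_pos : 0 < Function.minimalPeriod (⇑σ) x₀ := by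
  cases nonempty_fintype D
  refine Function.IsPeriodicPt.minimalPeriod_pos (orderOf_pos σ) ?_
  show (⇑σ)^[orderOf σ] x₀ = x₀
  show ((σ : Equiv.Perm D) ^ (orderOf σ)) x₀ = x₀
  rw [pow_orderOf_eq_one]; rfl

lemma perm_zpow_fixed_iff (c : ℤ) :
    (σ ^ c) x₀ = x₀ ↔ ((Function.minimalPeriod (⇑σ) x₀ : ℤ)) ∣ c := by
  have base : ∀ c' : ℕ, ((σ ^ (c' : ℤ)) x₀ = x₀ ↔ ((Function.minimalPeriod (⇑σ) x₀ : ℤ)) ∣ (c' : ℤ)) := by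
    intro c'
    rw [zpow_natCast, Int.natCast_dvd_natCast]
    rw [← Function.isPeriodicPt_iff_minimalPeriod_dvd]
    rfl
  rcases Int.eq_nat_or_neg c with ⟨c', rfl | rfl⟩
  · exact base c'
  · rw [zpow_neg, dvd_neg, ← base c', Equiv.Perm.inv_eq_iff_eq, eq_comm]

lemma perm_zpow_eq_iff (a b : ℤ) :
    (σ ^ a) x₀ = (σ ^ b) x₀ ↔ ((Function.minimalPeriod (⇑σ) x₀ : ℤ)) ∣ (a - b) := by
  rw [← perm_zpow_fixed_iff σ x₀ (a - b)]
  constructor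
  · intro h
    have := congrArg (⇑(σ ^ (-b))) h
    simp only [← Equiv.Perm.mul_apply, ← zpow_add] at this
    rw [show -b + a = a - b by ring, show -b + b = (0:ℤ) by ring] at this
    simpa using this
  · intro h
    have := congrArg (⇑(σ ^ b)) h
    simp only [← Equiv.Perm.mul_apply, ← zpow_add] at this
    rw [show b + (a - b) = a by ring] at this
    simpa using this

lemma exists_nat_zpow (j : ℤ) :
    ∃ k : ℕ, k < Function.minimalPeriod (⇑σ) x₀ ∧ (σ ^ (k : ℤ)) x₀ = (σ ^ j) x₀ := by
  set n := Function.minimalPeriod (⇑σ) x₀ with hn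
  have hpos := perm_period_pos σ x₀
  refine ⟨(j % (n : ℤ)).toNat, ?_, ?_⟩
  · have h1 : 0 ≤ j % (n : ℤ) := Int.emod_nonneg j (by exact_mod_cast hpos.ne')
    have h2 : j % (n : ℤ) < n := Int.emod_lt_of_pos j (by exact_mod_cast hpos)
    omega
  · rw [perm_zpow_eq_iff]
    have h1 : 0 ≤ j % (n : ℤ) := Int.emod_nonneg j (by exact_mod_cast hpos.ne')
    rw [Int.toNat_of_nonneg h1]
    have hd : (n : ℤ) ∣ j - j % (n : ℤ) := Int.dvd_self_sub_of_emod_eq rfl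
    have : (n : ℤ) ∣ j % (n : ℤ) - j := by simpa [neg_sub] using dvd_neg.mpr hd
    exact this

lemma card_zorbit :
    Nat.card {d : D // ∃ j : ℤ, (σ ^ j) x₀ = d} = Function.minimalPeriod (⇑σ) x₀ := by
  set n := Function.minimalPeriod (⇑σ) x₀ with hn
  have hpos := perm_period_pos σ x₀
  have key := perm_zpow_eq_iff σ x₀
  have e : Fin n ≃ {d : D // ∃ j : ℤ, (σ ^ j) x₀ = d} := by
    refine Equiv.ofBijective (fun i => ⟨(σ ^ (i : ℤ)) x₀, ⟨i, rfl⟩⟩) ⟨?_, ?_⟩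
    · intro i j hij
      have h2 : (σ ^ ((i : ℕ) : ℤ)) x₀ = (σ ^ ((j : ℕ) : ℤ)) x₀ := congrArg Subtype.val hij
      rw [key] at h2
      have hi := i.isLt
      have hj := j.isLt
      have h3 := Int.eq_zero_of_abs_lt_dvd h2 (by rw [abs_lt]; constructor <;> [omega; omega])
      exact Fin.ext (by omega)
    · rintro ⟨d, j, rfl⟩
      obtain ⟨k, hk1, hk2⟩ := exists_nat_zpow σ x₀ j
      exact ⟨⟨k, hk1⟩, Subtype.ext hk2⟩
  exact Nat.card_eq_of_equiv_fin e.symm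

end orbit

set_option linter.unusedSectionVars false

namespace CombMap

lemma vertexOf_eq_iff {D : Type} (M : CombMap D) (x d : D) :
    M.vertexOf d = M.vertexOf x ↔ ∃ j : ℤ, (M.σ ^ j) x = d := by
  show Quotient.mk _ d = Quotient.mk _ x ↔ _
  rw [Quotient.eq]
  show (∃ n : ℤ, (M.σ ^ n) d = x) ↔ _
  constructor
  · rintro ⟨n, hn⟩
    exact ⟨-n, by rw [← hn, ← Equiv.Perm.mul_apply, ← zpow_add]; simp⟩
  · rintro ⟨n, hn⟩
    exact ⟨-n, by rw [← hn, ← Equiv.Perm.mul_apply, ← zpow_add]; simp⟩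

end CombMap

open CombMap in
/-- Let `φ` be an orientation-reversing (colour-preserving) automorphism
of the barycentric subdivision `B` of a 2-connected loopless plane map `M`, and suppose
`φ` fixes some vertex. Then in the submap of `B` consisting of all vertices and edges
fixed by `φ` — a disjoint union of cycles — every endpoint of a fixed edge is a fixed
vertex, every fixed vertex has degree exactly 2 (it lies on exactly two fixed edges), and
the two fixed edges at each fixed vertex are diametrically opposite in the rotation
around that vertex. -/
theorem fixed_submap_of_orientation_reversing_automorphism_of_bary
    {D : Type} [Finite D] (M : CombMap D) (hplane : M.IsPlaneMap)
    (h2conn : M.TwoConnected)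
    (φ : Equiv.Perm (BaryDart D)) (hφ : M.bary.IsORAutoMap φ)
    (hcol : ∀ x, baryCol (φ x) = baryCol x)
    (hfix : ∃ v : M.bary.Vertices, M.bary.FixesVertex φ v) :
    (∀ x : BaryDart D, M.bary.FixedEdgeDart φ x →
        M.bary.FixesVertex φ (M.bary.vertexOf x)) ∧
    ∀ v : M.bary.Vertices, M.bary.FixesVertex φ v →
      Nat.card {x : BaryDart D // M.bary.vertexOf x = v ∧ M.bary.FixedEdgeDart φ x} = 2 ∧
      ∃ (x₁ x₂ : BaryDart D) (k : ℕ), x₁ ≠ x₂ ∧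
        M.bary.vertexOf x₁ = v ∧ M.bary.FixedEdgeDart φ x₁ ∧
        M.bary.vertexOf x₂ = v ∧ M.bary.FixedEdgeDart φ x₂ ∧
        M.bary.degree v = 2 * k ∧ (⇑M.bary.σ)^[k] x₁ = x₂ := by
  classical
  have hσc := hφ.2
  have hsc : SemiconjBy φ M.bary.σ (M.bary.σ)⁻¹ := Equiv.ext fun d => by
    simp only [Equiv.Perm.mul_apply]
    rw [hσc d]; rfl
  have hsemi : ∀ (j : ℤ) (x : BaryDart D),
      φ ((M.bary.σ ^ j) x) = (M.bary.σ ^ (-j)) (φ x) := by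
    intro j x
    have h := hsc.zpow_right j
    calc φ ((M.bary.σ ^ j) x) = (φ * M.bary.σ ^ j) x := rfl
      _ = ((M.bary.σ⁻¹) ^ j * φ) x := by rw [h]
      _ = (M.bary.σ ^ (-j)) (φ x) := by rw [inv_zpow, ← zpow_neg]; rfl
  have hfixdart : ∀ x, M.bary.FixedEdgeDart φ x → φ x = x := by
    intro x h
    rcases h with h | h
    · exact h
    · exfalso; apply baryCol_theta M x; rw [← h]; exact hcol x
  constructor
  · intro x hx
    have hxfix := hfixdart x hx
    intro d hd
    rw [vertexOf_eq_iff] at hd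
    obtain ⟨j, rfl⟩ := hd
    rw [vertexOf_eq_iff]
    exact ⟨-j, by rw [hsemi j x, hxfix]⟩
  · intro v hv
    obtain ⟨x₀, hx₀⟩ := Quotient.exists_rep v
    have hx₀' : M.bary.vertexOf x₀ = v := hx₀
    subst hx₀'
    set n := Function.minimalPeriod (⇑M.bary.σ) x₀ with hn
    have hpos : 0 < n := perm_period_pos _ x₀
    have key : ∀ a b : ℤ, (M.bary.σ ^ a) x₀ = (M.bary.σ ^ b) x₀ ↔ (n : ℤ) ∣ (a - b) :=
      perm_zpow_eq_iff _ x₀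
    have hmem : ∀ d, M.bary.vertexOf d = M.bary.vertexOf x₀ ↔
        ∃ j : ℤ, (M.bary.σ ^ j) x₀ = d := fun d => M.bary.vertexOf_eq_iff x₀ d
    have hitn : (⇑M.bary.σ)^[n] x₀ = x₀ :=
      Function.isPeriodicPt_minimalPeriod (⇑M.bary.σ) x₀
    have hneven : n % 2 = 0 := by
      have h1 := M.snd_sigma_iterate x₀ n
      rw [hitn] at h1
      omega
    have hx0 : M.bary.vertexOf (φ x₀) = M.bary.vertexOf x₀ := hv x₀ rfl
    obtain ⟨j₀, hj₀⟩ := (hmem _).mp hx0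
    obtain ⟨k, hkn, hk⟩ := exists_nat_zpow M.bary.σ x₀ j₀
    rw [hj₀] at hk
    have hsnd := M.snd_phi φ hφ.1 hcol x₀
    have hkeven : k % 2 = 0 := by
      have h1 := M.snd_sigma_iterate x₀ k
      have h2 : (⇑M.bary.σ)^[k] x₀ = φ x₀ := by rw [← hk, zpow_natCast]; rfl
      rw [h2, hsnd] at h1
      omega
    obtain ⟨k', hk'⟩ : ∃ k', k = 2 * k' := ⟨k / 2, by omega⟩
    obtain ⟨m, hm⟩ : ∃ m, n = 2 * m := ⟨n / 2, by omega⟩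
    have hmpos : 0 < m := by omega
    set x₁ := (M.bary.σ ^ (k' : ℤ)) x₀ with hx₁
    set x₂ := (M.bary.σ ^ ((k' : ℤ) + m)) x₀ with hx₂
    have hphi : ∀ j : ℤ, φ ((M.bary.σ ^ j) x₀) = (M.bary.σ ^ ((k : ℤ) - j)) x₀ := by
      intro j
      rw [hsemi j x₀, ← hk, ← Equiv.Perm.mul_apply, ← zpow_add,
        show -j + (k : ℤ) = (k : ℤ) - j from by ring]
    have hfix1 : φ x₁ = x₁ := by
      rw [hx₁, hphi k', key]
      exact ⟨0, by omega⟩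
    have hfix2 : φ x₂ = x₂ := by
      rw [hx₂, hphi, key]
      exact ⟨-1, by omega⟩
    have hne : x₁ ≠ x₂ := by
      rw [hx₁, hx₂, Ne, key]
      intro hdvd
      have h0 := Int.eq_zero_of_abs_lt_dvd hdvd (by rw [abs_lt]; constructor <;> omega)
      omega
    have hv1 : M.bary.vertexOf x₁ = M.bary.vertexOf x₀ := (hmem _).mpr ⟨k', rfl⟩
    have hv2 : M.bary.vertexOf x₂ = M.bary.vertexOf x₀ := (hmem _).mpr ⟨(k' : ℤ) + m, rfl⟩
    have hS : {x : BaryDart D | M.bary.vertexOf x = M.bary.vertexOf x₀ ∧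
        M.bary.FixedEdgeDart φ x} = {x₁, x₂} := by
      ext x
      simp only [Set.mem_setOf_eq, Set.mem_insert_iff, Set.mem_singleton_iff]
      constructor
      · rintro ⟨hxv, hxf⟩
        obtain ⟨j, rfl⟩ := (hmem x).mp hxv
        have hfx := hfixdart _ hxf
        rw [hphi j, key] at hfx
        obtain ⟨t, ht⟩ := hfx
        have ht' : (k' : ℤ) - j = m * t := by
          push_cast [hk', hm] at ht ⊢; linarith
        rcases Int.even_or_odd t with ⟨s, hs⟩ | ⟨s, hs⟩
        · left
          have h2 : (k' : ℤ) - j = m * (s + s) := by rw [← hs]; exact ht'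
          rw [hx₁, key]
          exact ⟨-s, by push_cast [hm]; linear_combination -h2⟩
        · right
          have h2 : (k' : ℤ) - j = m * (2 * s + 1) := by rw [← hs]; exact ht'
          rw [hx₂, key]
          exact ⟨-(s + 1), by push_cast [hm]; linear_combination -h2⟩
      · rintro (rfl | rfl)
        · exact ⟨hv1, Or.inl hfix1⟩
        · exact ⟨hv2, Or.inl hfix2⟩
    have hcard : Nat.card {x : BaryDart D // M.bary.vertexOf x = M.bary.vertexOf x₀ ∧
        M.bary.FixedEdgeDart φ x} = 2 := by
      have h2 : Nat.card ({x₁, x₂} : Set (BaryDart D)) = 2 := by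
        rw [Nat.card_coe_set_eq, Set.ncard_pair hne]
      rw [← hS] at h2
      exact h2
    have hdeg : M.bary.degree (M.bary.vertexOf x₀) = n :=
      (Nat.card_congr (Equiv.subtypeEquivRight hmem)).trans (card_zorbit M.bary.σ x₀)
    refine ⟨hcard, x₁, x₂, m, hne, hv1, Or.inl hfix1, hv2, Or.inl hfix2, hdeg.trans hm, ?_⟩
    have hit : (⇑M.bary.σ)^[m] x₁ = (M.bary.σ ^ (m : ℤ)) x₁ := by rw [zpow_natCast]; rfl
    rw [hit, hx₁, ← Equiv.Perm.mul_apply, ← zpow_add, hx₂, key]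
    exact ⟨0, by ring⟩
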